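/- arXiv:2110.01051 — 6 statements merged into one kernel-verified Lean document; each statement's English description precedes it below -/
import Mathlib

section
/- For any real numbers h > 0 and α, the polynomial k(z) = (6h/25)z^5 + (h/50)z^3 - (63h/50)z + α(1 - z^2) has exactly two real critical points: one negative point where a local maximum occurs and one positive point where a local minimum occurs; moreover k is strictly increasing on (-∞, p⁻] and on [p⁺, ∞) and strictly decreasing on [p⁻, p⁺], where p⁻ < 0 < p⁺ are the critical points. -/
open Set

/-- strict convexity combination on ℝ -/
lemma conv_mid {g : ℝ → ℝ} (hg : StrictConvexOn ℝ Set.univ g) {x m y : ℝ}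
    (h1 : x < m) (h2 : m < y) :
    ∃ a b : ℝ, 0 < a ∧ 0 < b ∧ a + b = 1 ∧ g m < a * g x + b * g y := by
  have hyx : (0:ℝ) < y - x := by linarith
  have ha : (0:ℝ) < (y - m) / (y - x) := div_pos (by linarith) hyx
  have hb : (0:ℝ) < (m - x) / (y - x) := div_pos (by linarith) hyx
  have hab : (y - m) / (y - x) + (m - x) / (y - x) = 1 := by
    field_simp
    ring
  refine ⟨(y - m) / (y - x), (m - x) / (y - x), ha, hb, hab, ?_⟩
  have := hg.2 (Set.mem_univ x) (Set.mem_univ y) (by linarith : x ≠ y) ha hb hab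
  have hc : ((y - m) / (y - x)) • x + ((m - x) / (y - x)) • y = m := by
    simp only [smul_eq_mul]
    field_simp
    ring
  rw [hc] at this
  simpa [smul_eq_mul] using this

theorem stmt_2 (h α : ℝ) (hh : h > 0)
    (k : ℝ → ℝ)
    (hk : k = fun z => (6 * h / 25) * z ^ 5 + (h / 50) * z ^ 3 - (63 * h / 50) * z
      + α * (1 - z ^ 2)) :
    ∃ pm pp : ℝ, pm < 0 ∧ 0 < pp ∧
      {z : ℝ | deriv k z = 0} = {pm, pp} ∧
      IsLocalMax k pm ∧ IsLocalMin k pp ∧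
      StrictMonoOn k (Set.Iic pm) ∧ StrictMonoOn k (Set.Ici pp) ∧
      StrictAntiOn k (Set.Icc pm pp) := by
  set g : ℝ → ℝ := fun z => 6 * h / 5 * z ^ 4 + 3 * h / 50 * z ^ 2 - 2 * α * z - 63 * h / 50
    with hg_def
  have Hk : ∀ z, HasDerivAt k (g z) z := by
    intro z
    rw [hk]
    have H := ((((hasDerivAt_pow 5 z).const_mul (6 * h / 25)).add
        ((hasDerivAt_pow 3 z).const_mul (h / 50))).sub
        ((hasDerivAt_id z).const_mul (63 * h / 50))).add
        (((hasDerivAt_const z (1:ℝ)).sub (hasDerivAt_pow 2 z)).const_mul α)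
    refine H.congr_deriv ?_
    simp [hg_def]
    push_cast
    ring
  have hdk : deriv k = g := funext fun z => (Hk z).deriv
  have Hg : ∀ z, HasDerivAt g (24 * h / 5 * z ^ 3 + 3 * h / 25 * z - 2 * α) z := by
    intro z
    have H := ((((hasDerivAt_pow 4 z).const_mul (6 * h / 5)).add
        ((hasDerivAt_pow 2 z).const_mul (3 * h / 50))).sub
        ((hasDerivAt_id z).const_mul (2 * α))).sub (hasDerivAt_const z (63 * h / 50))
    refine H.congr_deriv ?_
    push_cast
    ring
  have Hg2 : ∀ z, HasDerivAt (fun z => 24 * h / 5 * z ^ 3 + 3 * h / 25 * z - 2 * α)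
      (72 * h / 5 * z ^ 2 + 3 * h / 25) z := by
    intro z
    have H := (((hasDerivAt_pow 3 z).const_mul (24 * h / 5)).add
        ((hasDerivAt_id z).const_mul (3 * h / 25))).sub (hasDerivAt_const z (2 * α))
    refine H.congr_deriv ?_
    push_cast
    ring
  have hgc : Continuous g := by fun_prop
  have hconv : StrictConvexOn ℝ Set.univ g := by
    apply strictConvexOn_univ_of_deriv2_pos hgc
    intro x
    have h1 : deriv g = fun z => 24 * h / 5 * z ^ 3 + 3 * h / 25 * z - 2 * α :=
      funext fun z => (Hg z).deriv
    have : deriv^[2] g x = deriv (deriv g) x := by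
      simp [Function.iterate_succ, Function.comp]
    rw [this, h1, (Hg2 x).deriv]
    nlinarith [sq_nonneg x]
  -- choose R
  set R : ℝ := max 1 (5 * (2 * |α| + 63 * h / 50 + 1) / (6 * h)) with hR_def
  have hR1 : (1:ℝ) ≤ R := le_max_left _ _
  have hR2 : 2 * |α| + 63 * h / 50 + 1 ≤ 6 * h / 5 * R := by
    have := le_max_right 1 (5 * (2 * |α| + 63 * h / 50 + 1) / (6 * h))
    rw [div_le_iff₀ (by positivity)] at this
    linarith
  have habs1 : α ≤ |α| := le_abs_self α
  have habs2 : -α ≤ |α| := neg_le_abs α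
  have hgR : 0 < g R := by
    have hcube : R ≤ R ^ 3 := by
      nlinarith [mul_nonneg (mul_nonneg (by linarith : (0:ℝ) ≤ R) (by linarith : (0:ℝ) ≤ R - 1)) (by linarith : (0:ℝ) ≤ R + 1)]
    simp only [hg_def]
    nlinarith [sq_nonneg R, mul_le_mul_of_nonneg_left hcube (by positivity : (0:ℝ) ≤ 6 * h / 5)]
  have hgmR : 0 < g (-R) := by
    have hcube : R ≤ R ^ 3 := by
      nlinarith [mul_nonneg (mul_nonneg (by linarith : (0:ℝ) ≤ R) (by linarith : (0:ℝ) ≤ R - 1)) (by linarith : (0:ℝ) ≤ R + 1)]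
    simp only [hg_def]
    nlinarith [sq_nonneg R, mul_le_mul_of_nonneg_left hcube (by positivity : (0:ℝ) ≤ 6 * h / 5)]
  have hg0 : g 0 < 0 := by simp [hg_def]; positivity
  -- roots
  obtain ⟨pm, hpm_mem, hpm⟩ : ∃ pm ∈ Ioo (-R) 0, g pm = 0 := by
    have := intermediate_value_Ioo' (le_of_lt (by linarith : (-R) < 0)) hgc.continuousOn
      (show (0:ℝ) ∈ Ioo (g 0) (g (-R)) from ⟨hg0, hgmR⟩)
    obtain ⟨pm, hmem, hval⟩ := this
    exact ⟨pm, hmem, hval⟩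
  obtain ⟨pp, hpp_mem, hpp⟩ : ∃ pp ∈ Ioo 0 R, g pp = 0 := by
    have := intermediate_value_Ioo (le_of_lt (by linarith : (0:ℝ) < R)) hgc.continuousOn
      (show (0:ℝ) ∈ Ioo (g 0) (g R) from ⟨hg0, hgR⟩)
    obtain ⟨pp, hmem, hval⟩ := this
    exact ⟨pp, hmem, hval⟩
  have hpm0 : pm < 0 := hpm_mem.2
  have hpp0 : 0 < pp := hpp_mem.1
  have hpmpp : pm < pp := lt_trans hpm0 hpp0
  -- sign facts
  have hneg : ∀ z, pm < z → z < pp → g z < 0 := by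
    intro z h1 h2
    obtain ⟨a, b, ha, hb, hab, hlt⟩ := conv_mid hconv h1 h2
    rw [hpm, hpp] at hlt
    linarith [hlt]
  have hposL : ∀ z, z < pm → 0 < g z := by
    intro z h1
    obtain ⟨a, b, ha, hb, hab, hlt⟩ := conv_mid hconv h1 hpmpp
    rw [hpm, hpp] at hlt
    nlinarith
  have hposR : ∀ z, pp < z → 0 < g z := by
    intro z h1
    obtain ⟨a, b, ha, hb, hab, hlt⟩ := conv_mid hconv hpmpp h1
    rw [hpm, hpp] at hlt
    nlinarith
  have hkc : Continuous k := by rw [hk]; fun_prop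
  have hmono1 : StrictMonoOn k (Set.Iic pm) := by
    apply strictMonoOn_of_deriv_pos (convex_Iic pm) hkc.continuousOn
    intro z hz
    rw [interior_Iic] at hz
    rw [hdk]
    exact hposL z hz
  have hmono2 : StrictMonoOn k (Set.Ici pp) := by
    apply strictMonoOn_of_deriv_pos (convex_Ici pp) hkc.continuousOn
    intro z hz
    rw [interior_Ici] at hz
    rw [hdk]
    exact hposR z hz
  have hanti : StrictAntiOn k (Set.Icc pm pp) := by
    apply strictAntiOn_of_deriv_neg (convex_Icc pm pp) hkc.continuousOn
    intro z hz
    rw [interior_Icc] at hz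
    rw [hdk]
    exact hneg z hz.1 hz.2
  refine ⟨pm, pp, hpm0, hpp0, ?_, ?_, ?_, hmono1, hmono2, hanti⟩
  · ext z
    simp only [Set.mem_setOf_eq, Set.mem_insert_iff, Set.mem_singleton_iff, hdk]
    constructor
    · intro hz
      rcases lt_trichotomy z pm with h1 | h1 | h1
      · exact absurd hz (ne_of_gt (hposL z h1))
      · exact Or.inl h1
      rcases lt_trichotomy z pp with h2 | h2 | h2
      · exact absurd hz (ne_of_lt (hneg z h1 h2))
      · exact Or.inr h2
      · exact absurd hz (ne_of_gt (hposR z h2))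
    · rintro (rfl | rfl) <;> assumption
  · -- local max at pm
    have hnb : Set.Ioo (pm - 1) pp ∈ nhds pm :=
      Ioo_mem_nhds (by linarith) hpmpp
    filter_upwards [hnb] with z hz
    rcases le_or_gt z pm with h1 | h1
    · exact hmono1.monotoneOn (Set.mem_Iic.2 h1) (Set.mem_Iic.2 le_rfl) h1
    · exact hanti.antitoneOn ⟨le_rfl, le_of_lt hpmpp⟩ ⟨le_of_lt h1, le_of_lt hz.2⟩ (le_of_lt h1)
  · -- local min at pp
    have hnb : Set.Ioo pm (pp + 1) ∈ nhds pp :=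
      Ioo_mem_nhds hpmpp (by linarith)
    filter_upwards [hnb] with z hz
    rcases le_or_gt pp z with h1 | h1
    · exact hmono2.monotoneOn (Set.mem_Ici.2 le_rfl) (Set.mem_Ici.2 h1) h1
    · exact hanti.antitoneOn ⟨le_of_lt hz.1, le_of_lt h1⟩ ⟨le_of_lt hpmpp, le_rfl⟩ (le_of_lt h1)
end

section
/- Let 0 < L < h and α be real numbers, and let k(z) = α(1-z²) - g_h(z) where g_h(z) = -(h/50)z(2z+3)(2z-3)(3z²+7). Then k(1) = -h and k(-1) = h, and each of the three sets k⁻¹((-L,L)) ∩ (-∞,-1), k⁻¹((-L,L)) ∩ (-1,1), and k⁻¹((-L,L)) ∩ (1,∞) is a connected (possibly empty) subset of ℝ (i.e., an interval). -/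
noncomputable def uu (L h : ℝ) (z : ℝ) : ℝ :=
    (-(h / 50) * z * (2 * z + 3) * (2 * z - 3) * (3 * z ^ 2 + 7) - L) / (1 - z ^ 2)

lemma key_nonneg (L h : ℝ) (h1 : -h < L) (h2 : L < h) (z : ℝ) :
    0 ≤ h / 50 * (36 * z ^ 6 - 59 * z ^ 4 + 60 * z ^ 2 + 63) - 2 * z * L := by
  have h0 : 0 < h := by linarith
  rcases le_or_gt z 0 with hz | hz
  · have key : 0 ≤ h * ((z + 1) ^ 2 * (36 * z ^ 2 * (z - 1) ^ 2 + 13 * (z - 1) ^ 2 + 50)) := by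
      positivity
    nlinarith [mul_nonneg (neg_nonneg.mpr hz) (by linarith : (0:ℝ) ≤ h + L)]
  · have key : 0 ≤ h * ((z - 1) ^ 2 * (36 * z ^ 2 * (z + 1) ^ 2 + 13 * (z + 1) ^ 2 + 50)) := by
      positivity
    nlinarith [mul_nonneg hz.le (by linarith : (0:ℝ) ≤ h - L)]

lemma uu_hasDeriv (L h z : ℝ) (hz : 1 - z ^ 2 ≠ 0) :
    HasDerivAt (uu L h)
      ((h / 50 * (36 * z ^ 6 - 59 * z ^ 4 + 60 * z ^ 2 + 63) - 2 * z * L) / (1 - z ^ 2) ^ 2) z := by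
  have hx : HasDerivAt (fun x : ℝ => x) 1 z := hasDerivAt_id z
  have hnum : HasDerivAt
      (fun x : ℝ => -(h / 50) * x * (2 * x + 3) * (2 * x - 3) * (3 * x ^ 2 + 7) - L)
      (-(h / 50) * (60 * z ^ 4 + 3 * z ^ 2 - 63)) z := by
    have h5 : HasDerivAt (fun x : ℝ => 3 * x ^ 2 + 7) (3 * (2 * z)) z := by
      simpa using (((hasDerivAt_pow 2 z)).const_mul 3).add_const 7
    have h2' : HasDerivAt (fun x : ℝ => 2 * x + 3) 2 z := by
      simpa using (hx.const_mul 2).add_const 3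
    have h3' : HasDerivAt (fun x : ℝ => 2 * x - 3) 2 z := by
      simpa using (hx.const_mul 2).sub_const 3
    have h1' : HasDerivAt (fun x : ℝ => -(h / 50) * x) (-(h / 50)) z := by
      simpa using hx.const_mul (-(h / 50))
    have := (((h1'.mul h2').mul h3').mul h5).sub_const L
    refine this.congr_deriv ?_
    simp only [Pi.mul_apply]
    ring
  have hden : HasDerivAt (fun x : ℝ => 1 - x ^ 2) (-(2 * z)) z := by
    simpa using (hasDerivAt_pow 2 z).const_sub 1
  have := hnum.div hden hz
  refine this.congr_deriv ?_
  field_simp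
  ring
  
lemma uu_mono (L h : ℝ) (h1 : -h < L) (h2 : L < h) (S : Set ℝ)
    (hconv : Convex ℝ S) (hopen : IsOpen S) (hS : ∀ z ∈ S, 1 - z ^ 2 ≠ 0) :
    MonotoneOn (uu L h) S := by
  have hint : interior S = S := hopen.interior_eq
  apply monotoneOn_of_deriv_nonneg hconv
  · intro z hz
    exact ((uu_hasDeriv L h z (hS z hz)).differentiableAt).continuousAt.continuousWithinAt
  · intro z hz
    rw [hint] at hz
    exact ((uu_hasDeriv L h z (hS z hz)).differentiableAt).differentiableWithinAt
  · intro z hz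
    rw [hint] at hz
    rw [(uu_hasDeriv L h z (hS z hz)).deriv]
    apply div_nonneg (key_nonneg L h h1 h2 z) (sq_nonneg _)

lemma mem_iff_pos (L h α z : ℝ) (hz : 0 < 1 - z ^ 2) :
    (α * (1 - z ^ 2) - -(h / 50) * z * (2 * z + 3) * (2 * z - 3) * (3 * z ^ 2 + 7)
      ∈ Set.Ioo (-L) L) ↔ (uu L h z < α ∧ α < uu (-L) h z) := by
  unfold uu
  rw [Set.mem_Ioo, div_lt_iff₀ hz, lt_div_iff₀ hz]
  constructor <;> rintro ⟨a, b⟩ <;> exact ⟨by nlinarith, by nlinarith⟩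

lemma mem_iff_neg (L h α z : ℝ) (hz : 1 - z ^ 2 < 0) :
    (α * (1 - z ^ 2) - -(h / 50) * z * (2 * z + 3) * (2 * z - 3) * (3 * z ^ 2 + 7)
      ∈ Set.Ioo (-L) L) ↔ (uu (-L) h z < α ∧ α < uu L h z) := by
  unfold uu
  rw [Set.mem_Ioo, div_lt_iff_of_neg hz, lt_div_iff_of_neg hz]
  constructor <;> rintro ⟨a, b⟩ <;> exact ⟨by nlinarith, by nlinarith⟩

theorem stmt_3 (L h α : ℝ) (hL : 0 < L) (hLh : L < h)
    (g : ℝ → ℝ)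
    (hg : g = fun z => -(h / 50) * z * (2 * z + 3) * (2 * z - 3) * (3 * z ^ 2 + 7))
    (k : ℝ → ℝ) (hk : k = fun z => α * (1 - z ^ 2) - g z) :
    k 1 = -h ∧ k (-1) = h ∧
    IsPreconnected (k ⁻¹' Set.Ioo (-L) L ∩ Set.Iio (-1)) ∧
    IsPreconnected (k ⁻¹' Set.Ioo (-L) L ∩ Set.Ioo (-1) 1) ∧
    IsPreconnected (k ⁻¹' Set.Ioo (-L) L ∩ Set.Ioi 1) := by
  subst hg hk
  have hL' : -h < L := by linarith
  have hL'' : -h < -L := by linarith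
  have hL''' : -L < h := by linarith
  refine ⟨by norm_num; linarith, by norm_num; linarith, ?_, ?_, ?_⟩
  · -- Iio (-1)
    have hmono1 := uu_mono L h hL' hLh (Set.Iio (-1)) (convex_Iio _) isOpen_Iio
      (fun z hz => by simp only [Set.mem_Iio] at hz; nlinarith)
    have hmono2 := uu_mono (-L) h hL'' hL''' (Set.Iio (-1)) (convex_Iio _) isOpen_Iio
      (fun z hz => by simp only [Set.mem_Iio] at hz; nlinarith)
    apply Set.OrdConnected.isPreconnected
    constructor
    intro x hx y hy t ht
    simp only [Set.mem_Iio, Set.mem_inter_iff, Set.mem_preimage] at hx hy ⊢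
    have hxI : x ∈ Set.Iio (-1 : ℝ) := hx.2
    have hyI : y ∈ Set.Iio (-1 : ℝ) := hy.2
    have htI : t ∈ Set.Iio (-1 : ℝ) := by
      simp only [Set.mem_Iio] at hxI hyI ⊢; rcases ht with ⟨_, h2⟩; linarith
    have hxneg : 1 - x ^ 2 < 0 := by simp only [Set.mem_Iio] at hxI; nlinarith
    have hyneg : 1 - y ^ 2 < 0 := by simp only [Set.mem_Iio] at hyI; nlinarith
    have htneg : 1 - t ^ 2 < 0 := by simp only [Set.mem_Iio] at htI; nlinarith
    rw [mem_iff_neg L h α x hxneg] at hx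
    rw [mem_iff_neg L h α y hyneg] at hy
    refine ⟨(mem_iff_neg L h α t htneg).mpr ⟨?_, ?_⟩, htI⟩
    · exact lt_of_le_of_lt (hmono2 htI hyI ht.2) hy.1.1
    · exact lt_of_lt_of_le hx.1.2 (hmono1 hxI htI ht.1)
  · -- Ioo (-1) 1
    have hmono1 := uu_mono L h hL' hLh (Set.Ioo (-1) 1) (convex_Ioo _ _) isOpen_Ioo
      (fun z hz => by simp only [Set.mem_Ioo] at hz; nlinarith [hz.1, hz.2])
    have hmono2 := uu_mono (-L) h hL'' hL''' (Set.Ioo (-1) 1) (convex_Ioo _ _) isOpen_Ioo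
      (fun z hz => by simp only [Set.mem_Ioo] at hz; nlinarith [hz.1, hz.2])
    apply Set.OrdConnected.isPreconnected
    constructor
    intro x hx y hy t ht
    simp only [Set.mem_inter_iff, Set.mem_preimage] at hx hy ⊢
    have hxI : x ∈ Set.Ioo (-1 : ℝ) 1 := hx.2
    have hyI : y ∈ Set.Ioo (-1 : ℝ) 1 := hy.2
    have htI : t ∈ Set.Ioo (-1 : ℝ) 1 := by
      simp only [Set.mem_Ioo] at hxI hyI ⊢
      exact ⟨by rcases ht with ⟨h1, _⟩; linarith [hxI.1], by rcases ht with ⟨_, h2⟩; linarith [hyI.2]⟩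
    have hxpos : 0 < 1 - x ^ 2 := by simp only [Set.mem_Ioo] at hxI; nlinarith [hxI.1, hxI.2]
    have hypos : 0 < 1 - y ^ 2 := by simp only [Set.mem_Ioo] at hyI; nlinarith [hyI.1, hyI.2]
    have htpos : 0 < 1 - t ^ 2 := by simp only [Set.mem_Ioo] at htI; nlinarith [htI.1, htI.2]
    rw [mem_iff_pos L h α x hxpos] at hx
    rw [mem_iff_pos L h α y hypos] at hy
    refine ⟨(mem_iff_pos L h α t htpos).mpr ⟨?_, ?_⟩, htI⟩
    · exact lt_of_le_of_lt (hmono1 htI hyI ht.2) hy.1.1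
    · exact lt_of_lt_of_le hx.1.2 (hmono2 hxI htI ht.1)
  · -- Ioi 1
    have hmono1 := uu_mono L h hL' hLh (Set.Ioi 1) (convex_Ioi _) isOpen_Ioi
      (fun z hz => by simp only [Set.mem_Ioi] at hz; nlinarith)
    have hmono2 := uu_mono (-L) h hL'' hL''' (Set.Ioi 1) (convex_Ioi _) isOpen_Ioi
      (fun z hz => by simp only [Set.mem_Ioi] at hz; nlinarith)
    apply Set.OrdConnected.isPreconnected
    constructor
    intro x hx y hy t ht
    simp only [Set.mem_inter_iff, Set.mem_preimage] at hx hy ⊢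
    have hxI : x ∈ Set.Ioi (1 : ℝ) := hx.2
    have hyI : y ∈ Set.Ioi (1 : ℝ) := hy.2
    have htI : t ∈ Set.Ioi (1 : ℝ) := by
      simp only [Set.mem_Ioi] at hxI ⊢; rcases ht with ⟨h1, _⟩; linarith
    have hxneg : 1 - x ^ 2 < 0 := by simp only [Set.mem_Ioi] at hxI; nlinarith
    have hyneg : 1 - y ^ 2 < 0 := by simp only [Set.mem_Ioi] at hyI; nlinarith
    have htneg : 1 - t ^ 2 < 0 := by simp only [Set.mem_Ioi] at htI; nlinarith
    rw [mem_iff_neg L h α x hxneg] at hx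
    rw [mem_iff_neg L h α y hyneg] at hy
    refine ⟨(mem_iff_neg L h α t htneg).mpr ⟨?_, ?_⟩, htI⟩
    · exact lt_of_le_of_lt (hmono2 htI hyI ht.2) hy.1.1
    · exact lt_of_lt_of_le hx.1.2 (hmono1 hxI htI ht.1)
end

section
/- The map F : ℝ³ → ℝ³ given by F(x,y,z) = ((A(x)+g_{h₁}(z))E(y), (A(x)+g_{h₂}(z))E(y), (1-z²)E(y)), with A(x) = Lx/√(1+x²), E(y) = y + √(1+y²), g_h(z) = -(h/50)z(2z+3)(2z-3)(3z²+7), and h₂ > h₁ > L > 0, has Jacobian determinant J(F)(x,y,z) = ((h₁-h₂)/50)·E(y)²·E'(y)·A'(x)·(36z⁶ - 59z⁴ + 60z² + 63), which is nonzero at every point of ℝ³. -/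
noncomputable def e3 : (ℝ × ℝ × ℝ) ≃ₗ[ℝ] (Fin 3 → ℝ) where
  toFun p := ![p.1, p.2.1, p.2.2]
  invFun v := (v 0, v 1, v 2)
  map_add' p q := by funext i; fin_cases i <;> simp
  map_smul' c p := by funext i; fin_cases i <;> simp
  left_inv p := by simp
  right_inv v := by funext i; fin_cases i <;> simp

noncomputable def B3 : Module.Basis (Fin 3) ℝ (ℝ × ℝ × ℝ) := Module.Basis.ofEquivFun e3

theorem det_aux (A E g₁ g₂ : ℝ → ℝ) (A' E' g₁' g₂' : ℝ → ℝ) (p : ℝ × ℝ × ℝ)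
    (hA : HasDerivAt A (A' p.1) p.1) (hE : HasDerivAt E (E' p.2.1) p.2.1)
    (h1 : HasDerivAt g₁ (g₁' p.2.2) p.2.2) (h2 : HasDerivAt g₂ (g₂' p.2.2) p.2.2) :
    LinearMap.det ((fderiv ℝ (fun p : ℝ × ℝ × ℝ =>
        ((A p.1 + g₁ p.2.2) * E p.2.1,
         ((A p.1 + g₂ p.2.2) * E p.2.1, (1 - p.2.2 ^ 2) * E p.2.1))) p).toLinearMap) =
      A' p.1 * E p.2.1 ^ 2 * E' p.2.1 *
        (2 * p.2.2 * (g₁ p.2.2 - g₂ p.2.2) + (1 - p.2.2 ^ 2) * (g₁' p.2.2 - g₂' p.2.2)) := by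
  obtain ⟨x, y, z⟩ := p
  have hfx : HasFDerivAt (fun p : ℝ × ℝ × ℝ => A p.1)
      (A' x • ContinuousLinearMap.fst ℝ ℝ (ℝ × ℝ)) (x, y, z) :=
    hA.comp_hasFDerivAt (x,y,z) (hasFDerivAt_fst)
  have hsnd : HasFDerivAt (fun p : ℝ × ℝ × ℝ => p.2) (ContinuousLinearMap.snd ℝ ℝ (ℝ × ℝ)) (x,y,z) :=
    hasFDerivAt_snd
  have hfy : HasFDerivAt (fun p : ℝ × ℝ × ℝ => E p.2.1)
      (E' y • ((ContinuousLinearMap.fst ℝ ℝ ℝ).comp (ContinuousLinearMap.snd ℝ ℝ (ℝ × ℝ)))) (x, y, z) :=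
    hE.comp_hasFDerivAt (x,y,z) hsnd.fst
  have hfz1 : HasFDerivAt (fun p : ℝ × ℝ × ℝ => g₁ p.2.2)
      (g₁' z • ((ContinuousLinearMap.snd ℝ ℝ ℝ).comp (ContinuousLinearMap.snd ℝ ℝ (ℝ × ℝ)))) (x, y, z) :=
    h1.comp_hasFDerivAt (x,y,z) hsnd.snd
  have hfz2 : HasFDerivAt (fun p : ℝ × ℝ × ℝ => g₂ p.2.2)
      (g₂' z • ((ContinuousLinearMap.snd ℝ ℝ ℝ).comp (ContinuousLinearMap.snd ℝ ℝ (ℝ × ℝ)))) (x, y, z) :=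
    h2.comp_hasFDerivAt (x,y,z) hsnd.snd
  have hfz3 : HasFDerivAt (fun p : ℝ × ℝ × ℝ => 1 - p.2.2 ^ 2)
      ((-(2 * z)) • ((ContinuousLinearMap.snd ℝ ℝ ℝ).comp (ContinuousLinearMap.snd ℝ ℝ (ℝ × ℝ)))) (x, y, z) := by
    have : HasDerivAt (fun t : ℝ => 1 - t ^ 2) (-(2 * z)) z := by
      simpa using ((hasDerivAt_pow 2 z).const_sub 1)
    exact (this.comp_hasFDerivAt (x,y,z) hsnd.snd :)
  have hD := (((hfx.add hfz1).mul hfy).prodMk (((hfx.add hfz2).mul hfy).prodMk (hfz3.mul hfy)))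
  rw [HasFDerivAt.fderiv (f := fun p : ℝ × ℝ × ℝ => ((A p.1 + g₁ p.2.2) * E p.2.1,
    ((A p.1 + g₂ p.2.2) * E p.2.1, (1 - p.2.2 ^ 2) * E p.2.1))) hD]
  rw [← LinearMap.det_toMatrix B3, Matrix.det_fin_three]
  simp only [LinearMap.toMatrix_apply, B3, Module.Basis.ofEquivFun_repr_apply, Module.Basis.coe_ofEquivFun,
    ContinuousLinearMap.coe_coe, ContinuousLinearMap.prod_apply, ContinuousLinearMap.add_apply,
    ContinuousLinearMap.smul_apply, ContinuousLinearMap.comp_apply,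
    ContinuousLinearMap.coe_fst', ContinuousLinearMap.coe_snd', e3]
  simp [Function.update, Matrix.cons_val_zero, Matrix.cons_val_one]
  ring

theorem hAder (L x : ℝ) :
    HasDerivAt (fun x => L * x / Real.sqrt (1 + x ^ 2))
      (L / ((1 + x ^ 2) * Real.sqrt (1 + x ^ 2))) x := by
  have hpos : (0:ℝ) < 1 + x ^ 2 := by positivity
  have hs : Real.sqrt (1 + x ^ 2) ≠ 0 := by positivity
  have hs2 : Real.sqrt (1 + x ^ 2) ^ 2 = 1 + x ^ 2 := Real.sq_sqrt hpos.le
  have hsq : HasDerivAt (fun x : ℝ => Real.sqrt (1 + x ^ 2))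
      (x / Real.sqrt (1 + x ^ 2)) x := by
    have h1 : HasDerivAt (fun x : ℝ => 1 + x ^ 2) (2 * x) x := by
      simpa using (hasDerivAt_pow 2 x).const_add 1
    have := (Real.hasDerivAt_sqrt hpos.ne').comp x h1
    refine this.congr_deriv (Eq.symm ?_)
    field_simp
  have hnum : HasDerivAt (fun x : ℝ => L * x) L x := by
    simpa using (hasDerivAt_id x).const_mul L
  have := hnum.div hsq hs
  refine this.congr_deriv (Eq.symm ?_)
  field_simp
  linear_combination (-(L*x^2)) * hs2

theorem hEder (y : ℝ) :
    HasDerivAt (fun y => y + Real.sqrt (1 + y ^ 2))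
      ((y + Real.sqrt (1 + y ^ 2)) / Real.sqrt (1 + y ^ 2)) y := by
  have hpos : (0:ℝ) < 1 + y ^ 2 := by positivity
  have hs : Real.sqrt (1 + y ^ 2) ≠ 0 := by positivity
  have hsq : HasDerivAt (fun y : ℝ => Real.sqrt (1 + y ^ 2))
      (y / Real.sqrt (1 + y ^ 2)) y := by
    have h1 : HasDerivAt (fun y : ℝ => 1 + y ^ 2) (2 * y) y := by
      simpa using (hasDerivAt_pow 2 y).const_add 1
    have := (Real.hasDerivAt_sqrt hpos.ne').comp y h1
    refine this.congr_deriv (Eq.symm ?_)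
    field_simp
  have := (hasDerivAt_id y).add hsq
  refine this.congr_deriv (Eq.symm ?_)
  field_simp
  ring

theorem hgder (h z : ℝ) :
    HasDerivAt (fun z : ℝ => -(h / 50) * z * (2 * z + 3) * (2 * z - 3) * (3 * z ^ 2 + 7))
      (-(h / 50) * (60 * z ^ 4 + 3 * z ^ 2 - 63)) z := by
  have h0 : HasDerivAt (fun z : ℝ => -(h/50) * z) (-(h/50)) z := by
    simpa using (hasDerivAt_id z).const_mul (-(h/50))
  have h1 : HasDerivAt (fun z : ℝ => 2 * z + 3) 2 z := by
    simpa using ((hasDerivAt_id z).const_mul 2).add_const 3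
  have h2 : HasDerivAt (fun z : ℝ => 2 * z - 3) 2 z := by
    simpa using ((hasDerivAt_id z).const_mul 2).sub_const 3
  have h3 : HasDerivAt (fun z : ℝ => 3 * z ^ 2 + 7) (3 * (2 * z)) z := by
    simpa using ((hasDerivAt_pow 2 z).const_mul 3).add_const 7
  have := ((h0.mul h1).mul h2).mul h3
  refine this.congr_deriv (Eq.symm ?_)
  simp only [Pi.mul_apply]
  ring

theorem stmt_4 (L h₁ h₂ : ℝ) (hL : 0 < L) (h1 : L < h₁) (h2 : h₁ < h₂)
    (A E : ℝ → ℝ) (g : ℝ → ℝ → ℝ)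
    (hA : A = fun x => L * x / Real.sqrt (1 + x ^ 2))
    (hE : E = fun y => y + Real.sqrt (1 + y ^ 2))
    (hg : g = fun h z => -(h / 50) * z * (2 * z + 3) * (2 * z - 3) * (3 * z ^ 2 + 7))
    (F : ℝ × ℝ × ℝ → ℝ × ℝ × ℝ)
    (hF : F = fun p => ((A p.1 + g h₁ p.2.2) * E p.2.1,
                       ((A p.1 + g h₂ p.2.2) * E p.2.1,
                        (1 - p.2.2 ^ 2) * E p.2.1))) :
    ∀ p : ℝ × ℝ × ℝ,
      LinearMap.det ((fderiv ℝ F p).toLinearMap) =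
        ((h₁ - h₂) / 50) * (E p.2.1) ^ 2 * deriv E p.2.1 * deriv A p.1 *
          (36 * p.2.2 ^ 6 - 59 * p.2.2 ^ 4 + 60 * p.2.2 ^ 2 + 63) ∧
      LinearMap.det ((fderiv ℝ F p).toLinearMap) ≠ 0 := by
  subst hA hE hg hF
  intro p
  set x := p.1 with hx
  set y := p.2.1 with hy
  set z := p.2.2 with hz
  have hAd : HasDerivAt (fun x => L * x / Real.sqrt (1 + x ^ 2))
      (L / ((1 + x ^ 2) * Real.sqrt (1 + x ^ 2))) x := hAder L x
  have hEd : HasDerivAt (fun y => y + Real.sqrt (1 + y ^ 2))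
      ((y + Real.sqrt (1 + y ^ 2)) / Real.sqrt (1 + y ^ 2)) y := hEder y
  have hg1 := hgder h₁ z
  have hg2 := hgder h₂ z
  have hdet := det_aux (fun x => L * x / Real.sqrt (1 + x ^ 2))
    (fun y => y + Real.sqrt (1 + y ^ 2))
    (fun z : ℝ => -(h₁ / 50) * z * (2 * z + 3) * (2 * z - 3) * (3 * z ^ 2 + 7))
    (fun z : ℝ => -(h₂ / 50) * z * (2 * z + 3) * (2 * z - 3) * (3 * z ^ 2 + 7))
    (fun x => L / ((1 + x ^ 2) * Real.sqrt (1 + x ^ 2)))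
    (fun y => (y + Real.sqrt (1 + y ^ 2)) / Real.sqrt (1 + y ^ 2))
    (fun z => -(h₁ / 50) * (60 * z ^ 4 + 3 * z ^ 2 - 63))
    (fun z => -(h₂ / 50) * (60 * z ^ 4 + 3 * z ^ 2 - 63))
    p hAd hEd hg1 hg2
  have hdA : deriv (fun x => L * x / Real.sqrt (1 + x ^ 2)) x
      = L / ((1 + x ^ 2) * Real.sqrt (1 + x ^ 2)) := hAd.deriv
  have hdE : deriv (fun y => y + Real.sqrt (1 + y ^ 2)) y
      = (y + Real.sqrt (1 + y ^ 2)) / Real.sqrt (1 + y ^ 2) := hEd.deriv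
  -- positivity facts
  have hsy : (0:ℝ) < Real.sqrt (1 + y ^ 2) := Real.sqrt_pos.mpr (by positivity)
  have hEy : (0:ℝ) < y + Real.sqrt (1 + y ^ 2) := by
    have : |y| < Real.sqrt (1 + y ^ 2) := by
      rw [← Real.sqrt_sq_eq_abs]
      exact Real.sqrt_lt_sqrt (by positivity) (by linarith)
    have := neg_lt_of_abs_lt this
    linarith
  have hA'pos : (0:ℝ) < L / ((1 + x ^ 2) * Real.sqrt (1 + x ^ 2)) := by
    have hsx : (0:ℝ) < Real.sqrt (1 + x ^ 2) := Real.sqrt_pos.mpr (by positivity)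
    positivity
  have hPpos : (0:ℝ) < 36 * z ^ 6 - 59 * z ^ 4 + 60 * z ^ 2 + 63 := by
    nlinarith [sq_nonneg (6 * z ^ 3 - 5 * z), sq_nonneg (z ^ 2), sq_nonneg z]
  have key : LinearMap.det ((fderiv ℝ (fun p : ℝ × ℝ × ℝ =>
        (((fun x => L * x / Real.sqrt (1 + x ^ 2)) p.1 +
            (fun h z => -(h / 50) * z * (2 * z + 3) * (2 * z - 3) * (3 * z ^ 2 + 7)) h₁ p.2.2) *
          (fun y => y + Real.sqrt (1 + y ^ 2)) p.2.1,
         (((fun x => L * x / Real.sqrt (1 + x ^ 2)) p.1 +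
            (fun h z => -(h / 50) * z * (2 * z + 3) * (2 * z - 3) * (3 * z ^ 2 + 7)) h₂ p.2.2) *
          (fun y => y + Real.sqrt (1 + y ^ 2)) p.2.1,
          (1 - p.2.2 ^ 2) * (fun y => y + Real.sqrt (1 + y ^ 2)) p.2.1))) p).toLinearMap) =
      ((h₁ - h₂) / 50) * (y + Real.sqrt (1 + y ^ 2)) ^ 2 *
        ((y + Real.sqrt (1 + y ^ 2)) / Real.sqrt (1 + y ^ 2)) *
        (L / ((1 + x ^ 2) * Real.sqrt (1 + x ^ 2))) *
        (36 * z ^ 6 - 59 * z ^ 4 + 60 * z ^ 2 + 63) := by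
    rw [hdet]
    ring
  constructor
  · rw [key, hdA, hdE]
  · rw [key]
    have h12 : h₁ - h₂ < 0 := by linarith
    have hne : ((h₁ - h₂) / 50) * (y + Real.sqrt (1 + y ^ 2)) ^ 2 *
        ((y + Real.sqrt (1 + y ^ 2)) / Real.sqrt (1 + y ^ 2)) *
        (L / ((1 + x ^ 2) * Real.sqrt (1 + x ^ 2))) *
        (36 * z ^ 6 - 59 * z ^ 4 + 60 * z ^ 2 + 63) < 0 := by
      have hE' : (0:ℝ) < (y + Real.sqrt (1 + y ^ 2)) / Real.sqrt (1 + y ^ 2) := by positivity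
      have : ((h₁ - h₂) / 50) < 0 := by linarith
      have := mul_pos (mul_pos (mul_pos (pow_pos hEy 2) hE') hA'pos) hPpos
      nlinarith
    exact ne_of_lt hne
end

section
/- Let F : ℝⁿ → ℝⁿ be a local homeomorphism, fix i, and let F_i : ℝⁿ → ℝⁿ⁻¹ be the map obtained from F by deleting the i-th coordinate function. Then F_i is an open map and every nonempty fiber F_i⁻¹(c) is a 1-dimensional topological manifold (every point of the fiber has a neighborhood in the fiber homeomorphic to ℝ). -/
open Set

/-- An open interval `Ioo a b` with `a < b` is homeomorphic to `ℝ`. -/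
noncomputable def iooHomeoReal {a b : ℝ} (hab : a < b) : (Set.Ioo a b) ≃ₜ ℝ := by
  have hm : (0 : ℝ) < (b - a) / 2 := by linarith
  have himg : affineHomeomorph ((b - a) / 2) ((a + b) / 2) hm.ne' '' Set.Ioo (-1 : ℝ) 1
      = Set.Ioo a b := by
    rw [affineHomeomorph_image_Ioo _ _ _ _ hm]
    norm_num
    ring_nf
  exact (((orderIsoIooNegOneOne ℝ).toHomeomorph.trans
    (((affineHomeomorph ((b - a) / 2) ((a + b) / 2) hm.ne').image (Set.Ioo (-1 : ℝ) 1)).trans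
      (Homeomorph.setCongr himg)))).symm

/-- The homeomorphism splitting off the `i`-th coordinate. -/
def splitHomeo (n : ℕ) (i : Fin (n + 1)) :
    (Fin (n + 1) → ℝ) ≃ₜ ℝ × (Fin n → ℝ) where
  toFun f := (f i, i.removeNth f)
  invFun p := i.insertNth p.1 p.2
  left_inv f := by simp
  right_inv p := by simp
  continuous_toFun := (continuous_apply i).prodMk (continuous_pi fun j => continuous_apply _)
  continuous_invFun := by
    show Continuous fun p : ℝ × (Fin n → ℝ) => i.insertNth (α := fun _ => ℝ) p.1 p.2
    exact Continuous.finInsertNth (A := fun _ => ℝ) i continuous_fst continuous_snd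

theorem stmt_9 (n : ℕ) (F : (Fin (n + 2) → ℝ) → Fin (n + 2) → ℝ)
    (hF : IsLocalHomeomorph F) (i : Fin (n + 2))
    (Fi : (Fin (n + 2) → ℝ) → Fin (n + 1) → ℝ)
    (hFi : Fi = fun x j => F x (i.succAbove j)) :
    IsOpenMap Fi ∧
    ∀ c : Fin (n + 1) → ℝ, ∀ x : (Fi ⁻¹' {c} : Set (Fin (n + 2) → ℝ)),
      ∃ U : Set (Fi ⁻¹' {c} : Set (Fin (n + 2) → ℝ)),
        IsOpen U ∧ x ∈ U ∧ Nonempty (U ≃ₜ ℝ) := by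
  have hproj : IsOpenMap (fun z : Fin (n + 2) → ℝ => i.removeNth z) := by
    have h := isOpenMap_snd.comp (splitHomeo (n + 1) i).isOpenMap
    convert h using 1
    funext z; rfl
  have hFiProj : Fi = (fun z : Fin (n + 2) → ℝ => i.removeNth z) ∘ F := by
    rw [hFi]; rfl
  constructor
  · rw [hFiProj]
    exact hproj.comp hF.isOpenMap
  · intro c x
    obtain ⟨y, hy⟩ := x
    obtain ⟨e, hye, hFe⟩ := hF y
    have hyS : Fi y = c := hy
    -- the curve γ t = insertNth i t c
    set γ : ℝ → (Fin (n + 2) → ℝ) := fun t => i.insertNth t c with hγ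
    have hγcont : Continuous γ := by
      rw [hγ]
      exact Continuous.finInsertNth (A := fun _ => ℝ) i continuous_id continuous_const
    have hremove : i.removeNth (F y) = c := by
      funext j
      have := congrFun hyS j
      rw [hFi] at this
      exact this
    have hγFy : γ (F y i) = F y := by
      rw [hγ]; dsimp only; rw [← hremove]; exact Fin.insertNth_self_removeNth i (F y)
    have hFyt : F y ∈ e.target := by rw [hFe]; exact e.map_source hye
    -- find an interval around t₀ := F y i inside γ ⁻¹' e.target
    have hopen : IsOpen (γ ⁻¹' e.target) := e.open_target.preimage hγcont
    have ht₀ : F y i ∈ γ ⁻¹' e.target := by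
      simp only [mem_preimage, hγFy]; exact hFyt
    obtain ⟨a, b, htab, hab⟩ := mem_nhds_iff_exists_Ioo_subset.1 (hopen.mem_nhds ht₀)
    have haltb : a < b := lt_trans htab.1 htab.2
    -- membership in e.target for γ t, t ∈ Ioo a b
    have hγmem : ∀ t ∈ Set.Ioo a b, γ t ∈ e.target := fun t ht => hab ht
    -- the open set in the ambient space
    set V : Set (Fin (n + 2) → ℝ) := e.source ∩ (fun z => F z i) ⁻¹' Set.Ioo a b with hV
    have hVopen : IsOpen V :=
      e.open_source.inter (isOpen_Ioo.preimage ((continuous_apply i).comp hF.continuous))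
    refine ⟨Subtype.val ⁻¹' V, hVopen.preimage continuous_subtype_val, ⟨hye, htab⟩, ?_⟩
    -- key facts
    have hsymmS : ∀ t ∈ Set.Ioo a b, Fi (e.symm (γ t)) = c := by
      intro t ht
      have h1 : F (e.symm (γ t)) = γ t := by
        rw [hFe]; exact e.right_inv (hγmem t ht)
      rw [hFi]
      funext j
      simp only
      rw [h1, hγ]
      simp [Fin.succAbove_ne i j]
    have hsymmV : ∀ t ∈ Set.Ioo a b, e.symm (γ t) ∈ V := by
      intro t ht
      refine ⟨e.map_target (hγmem t ht), ?_⟩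
      have h1 : F (e.symm (γ t)) = γ t := by
        rw [hFe]; exact e.right_inv (hγmem t ht)
      simp only [mem_preimage]; rw [h1, hγ]
      simpa using ht
    -- inverse direction
    have hback : ∀ z : Fin (n + 2) → ℝ, Fi z = c → z ∈ V → e.symm (γ (F z i)) = z := by
      intro z hz hzV
      have hrem : i.removeNth (F z) = c := by
        funext j; have := congrFun hz j; rw [hFi] at this; exact this
      have hγz : γ (F z i) = F z := by
        rw [hγ]; dsimp only; rw [← hrem]; exact Fin.insertNth_self_removeNth i (F z)
      rw [hγz, hFe]
      exact e.left_inv hzV.1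
    -- build the homeomorphism
    refine Nonempty.intro ?_
    have hcont_symm : Continuous fun t : Set.Ioo a b => e.symm (γ (t : ℝ)) := by
      apply e.continuousOn_symm.comp_continuous (hγcont.comp continuous_subtype_val)
      exact fun t => hγmem t t.2
    refine Homeomorph.trans (Homeomorph.symm ?_) (iooHomeoReal haltb)
    exact {
      toFun := fun t => ⟨⟨e.symm (γ (t : ℝ)), hsymmS t t.2⟩, hsymmV t t.2⟩
      invFun := fun z => ⟨F (z.1 : Fin (n + 2) → ℝ) i, z.2.2⟩
      left_inv := by
        rintro ⟨t, ht⟩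
        ext
        simp only
        have h1 : F (e.symm (γ t)) = γ t := by
          rw [hFe]; exact e.right_inv (hγmem t ht)
        rw [h1, hγ]
        simp
      right_inv := by
        rintro ⟨⟨z, hz⟩, hzV⟩
        refine Subtype.ext (Subtype.ext ?_)
        exact hback z hz hzV
      continuous_toFun := (hcont_symm.subtype_mk _).subtype_mk _
      continuous_invFun := by
        apply Continuous.subtype_mk
        exact (continuous_apply i).comp
          (hF.continuous.comp (continuous_subtype_val.comp continuous_subtype_val)) }
end

section
/- Let F : ℝⁿ → ℝⁿ be a local homeomorphism, fix i, and let R be a connected component of a nonempty fiber of F_i : ℝⁿ → ℝⁿ⁻¹. Then the i-th coordinate function f_i of F is strictly monotone along R; that is, f_i restricted to R is injective. -/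
open Set Topology Classical

section SecTheory

variable {X : Type*} [TopologicalSpace X] [T2Space X]

/-- A local section of `g` over `I`, with values in `Φ`. -/
def IsSecX (Φ : Set X) (g : X → ℝ) (I : Set ℝ) (σ : ℝ → X) : Prop :=
  IsOpen I ∧ IsPreconnected I ∧ ContinuousOn σ I ∧ ∀ t ∈ I, σ t ∈ Φ ∧ g (σ t) = t

/-- Local chart property: around each point of `Φ`, `g` restricted to `Φ` is a
homeomorphism onto an open subset of `ℝ`. -/
def ChartX (Φ : Set X) (g : X → ℝ) : Prop :=
  ∀ z ∈ Φ, ∃ U V τ, IsOpen U ∧ z ∈ U ∧ IsOpen V ∧ g z ∈ V ∧ ContinuousOn τ V ∧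
    (∀ t ∈ V, τ t ∈ U ∧ τ t ∈ Φ ∧ g (τ t) = t) ∧ (∀ w ∈ U ∩ Φ, g w ∈ V ∧ τ (g w) = w)

theorem sec_unique {Φ : Set X} {g : X → ℝ} (hch : ChartX Φ g)
    {I₁ I₂ : Set ℝ} {σ₁ σ₂ : ℝ → X} (h1 : IsSecX Φ g I₁ σ₁) (h2 : IsSecX Φ g I₂ σ₂)
    {t₀ : ℝ} (ht₁ : t₀ ∈ I₁) (ht₂ : t₀ ∈ I₂) (heq : σ₁ t₀ = σ₂ t₀) :
    ∀ t ∈ I₁ ∩ I₂, σ₁ t = σ₂ t := by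
  obtain ⟨hI₁, hpc₁, hc₁, hs₁⟩ := h1
  obtain ⟨hI₂, hpc₂, hc₂, hs₂⟩ := h2
  set I : Set ℝ := I₁ ∩ I₂ with hIdef
  have hIo : IsOpen I := hI₁.inter hI₂
  have hIpc : IsPreconnected I :=
    (hpc₁.ordConnected.inter hpc₂.ordConnected).isPreconnected
  set A : Set ℝ := {t ∈ I | σ₁ t = σ₂ t} with hAdef
  set B : Set ℝ := {t ∈ I | σ₁ t ≠ σ₂ t} with hBdef
  have hAo : IsOpen A := by
    rw [isOpen_iff_mem_nhds]
    intro t ht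
    obtain ⟨htI, hteq⟩ := ht
    have hz : σ₁ t ∈ Φ := (hs₁ t htI.1).1
    obtain ⟨U, V, τ, hUo, hzU, hVo, hgzV, hτc, hτs, hτinv⟩ := hch _ hz
    have hca₁ : ContinuousAt σ₁ t := (hc₁ t htI.1).continuousAt (hI₁.mem_nhds htI.1)
    have hca₂ : ContinuousAt σ₂ t := (hc₂ t htI.2).continuousAt (hI₂.mem_nhds htI.2)
    have h₁ : ∀ᶠ s in 𝓝 t, σ₁ s ∈ U := hca₁.eventually_mem (hUo.mem_nhds hzU)
    have h₂ : ∀ᶠ s in 𝓝 t, σ₂ s ∈ U := by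
      apply hca₂.eventually_mem
      rw [← hteq]
      exact hUo.mem_nhds hzU
    have h₃ : ∀ᶠ s in 𝓝 t, s ∈ I := hIo.mem_nhds htI
    filter_upwards [h₁, h₂, h₃] with s hs1U hs2U hsI
    refine ⟨hsI, ?_⟩
    have e₁ : τ (g (σ₁ s)) = σ₁ s := (hτinv _ ⟨hs1U, (hs₁ s hsI.1).1⟩).2
    have e₂ : τ (g (σ₂ s)) = σ₂ s := (hτinv _ ⟨hs2U, (hs₂ s hsI.2).1⟩).2
    rw [(hs₁ s hsI.1).2] at e₁
    rw [(hs₂ s hsI.2).2] at e₂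
    rw [← e₁, ← e₂]
  have hBo : IsOpen B := by
    rw [isOpen_iff_mem_nhds]
    intro t ht
    obtain ⟨htI, htne⟩ := ht
    obtain ⟨D₁, D₂, hD₁, hD₂, hz₁, hz₂, hdisj⟩ := t2_separation htne
    have hca₁ : ContinuousAt σ₁ t := (hc₁ t htI.1).continuousAt (hI₁.mem_nhds htI.1)
    have hca₂ : ContinuousAt σ₂ t := (hc₂ t htI.2).continuousAt (hI₂.mem_nhds htI.2)
    filter_upwards [hca₁.eventually_mem (hD₁.mem_nhds hz₁),
      hca₂.eventually_mem (hD₂.mem_nhds hz₂), hIo.mem_nhds htI] with s hs1 hs2 hsI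
    refine ⟨hsI, fun hcon => ?_⟩
    exact hdisj.ne_of_mem hs1 hs2 (by rw [hcon])
  intro t htI
  by_contra hne
  have hsub : I ⊆ A ∪ B := fun s hs => by
    by_cases h : σ₁ s = σ₂ s
    · exact Or.inl ⟨hs, h⟩
    · exact Or.inr ⟨hs, h⟩
  obtain ⟨s, hsI, hsA, hsB⟩ := hIpc A B hAo hBo hsub ⟨t₀, ⟨ht₁, ht₂⟩, ⟨ht₁, ht₂⟩, heq⟩
    ⟨t, htI, htI, hne⟩
  exact hsB.2 hsA.2

theorem sec_glue {Φ : Set X} {g : X → ℝ} (hch : ChartX Φ g)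
    {I₁ I₂ : Set ℝ} {σ₁ σ₂ : ℝ → X} (h1 : IsSecX Φ g I₁ σ₁) (h2 : IsSecX Φ g I₂ σ₂)
    {t₀ : ℝ} (ht₁ : t₀ ∈ I₁) (ht₂ : t₀ ∈ I₂) (heq : σ₁ t₀ = σ₂ t₀) :
    IsSecX Φ g (I₁ ∪ I₂) (fun t => if t ∈ I₁ then σ₁ t else σ₂ t) := by
  have huniq := sec_unique hch h1 h2 ht₁ ht₂ heq
  obtain ⟨hI₁, hpc₁, hc₁, hs₁⟩ := h1
  obtain ⟨hI₂, hpc₂, hc₂, hs₂⟩ := h2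
  have hagree₂ : ∀ s ∈ I₂, (if s ∈ I₁ then σ₁ s else σ₂ s) = σ₂ s := by
    intro s hs
    by_cases h : s ∈ I₁
    · simp only [h, if_true]
      exact huniq s ⟨h, hs⟩
    · simp [h]
  refine ⟨hI₁.union hI₂, hpc₁.union t₀ ht₁ ht₂ hpc₂, ?_, ?_⟩
  · intro t ht
    apply ContinuousAt.continuousWithinAt
    rcases ht with ht | ht
    · have : ∀ᶠ s in 𝓝 t, (if s ∈ I₁ then σ₁ s else σ₂ s) = σ₁ s := by
        filter_upwards [hI₁.mem_nhds ht] with s hs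
        simp [hs]
      exact ((hc₁ t ht).continuousAt (hI₁.mem_nhds ht)).congr (Filter.EventuallyEq.symm this)
    · have : ∀ᶠ s in 𝓝 t, (if s ∈ I₁ then σ₁ s else σ₂ s) = σ₂ s := by
        filter_upwards [hI₂.mem_nhds ht] with s hs
        exact hagree₂ s hs
      exact ((hc₂ t ht).continuousAt (hI₂.mem_nhds ht)).congr (Filter.EventuallyEq.symm this)
  · intro t ht
    by_cases h : t ∈ I₁
    · simp only [h, if_true]
      exact hs₁ t h
    · rcases ht with ht | ht
      · exact absurd ht h
      · simp only [h, if_false]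
        exact hs₂ t ht

/-- The key abstract result: if `g` restricted to `Φ` is a local homeomorphism
to `ℝ`, then points of the same connected component of `Φ` with the same `g`-value
coincide. -/
theorem key_inj {Φ : Set X} {g : X → ℝ} (hch : ChartX Φ g) (hg : Continuous g)
    {a b : X} (ha : a ∈ Φ) (hb : b ∈ Φ)
    (hbR : b ∈ connectedComponentIn Φ a) (hgab : g a = g b) : a = b := by
  set t₀ : ℝ := g a with ht₀def
  set S : Set X :=
    {x | ∃ I σ, IsSecX Φ g I σ ∧ t₀ ∈ I ∧ σ t₀ = a ∧ ∃ t ∈ I, σ t = x} with hSdef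
  -- a ∈ S
  have haS : a ∈ S := by
    obtain ⟨U, V, τ, hUo, hzU, hVo, hgzV, hτc, hτs, hτinv⟩ := hch a ha
    obtain ⟨ε, hε, hball⟩ := Metric.isOpen_iff.1 hVo _ hgzV
    have hsec : IsSecX Φ g (Metric.ball (g a) ε) τ :=
      ⟨Metric.isOpen_ball, (convex_ball _ _).isPreconnected,
        hτc.mono hball, fun t ht => ⟨(hτs t (hball ht)).2.1, (hτs t (hball ht)).2.2⟩⟩
    have hτa : τ t₀ = a := (hτinv a ⟨hzU, ha⟩).2
    exact ⟨_, τ, hsec, Metric.mem_ball_self hε, hτa, ⟨t₀, Metric.mem_ball_self hε, hτa⟩⟩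
  -- S ⊆ connectedComponentIn Φ a
  have hSR : S ⊆ connectedComponentIn Φ a := by
    rintro x ⟨I, σ, ⟨hIo, hIpc, hσc, hσs⟩, ht₀I, hσa, t, htI, hσt⟩
    have himg : IsPreconnected (σ '' I) := hIpc.image σ hσc
    have hsubΦ : σ '' I ⊆ Φ := by
      rintro _ ⟨s, hs, rfl⟩
      exact (hσs s hs).1
    have haimg : a ∈ σ '' I := ⟨t₀, ht₀I, hσa⟩
    have := himg.subset_connectedComponentIn haimg hsubΦ
    exact this ⟨t, htI, hσt⟩
  -- transfer lemma within one chart/ball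
  have htrans : ∀ U V τ, IsOpen U → IsOpen V → ContinuousOn τ V →
      (∀ t ∈ V, τ t ∈ U ∧ τ t ∈ Φ ∧ g (τ t) = t) →
      (∀ w ∈ U ∩ Φ, g w ∈ V ∧ τ (g w) = w) →
      ∀ B : Set ℝ, IsOpen B → IsPreconnected B → B ⊆ V →
      ∀ p q, p ∈ U ∩ Φ → q ∈ U ∩ Φ → g p ∈ B → g q ∈ B → p ∈ S → q ∈ S := by
    intro U V τ hUo hVo hτc hτs hτinv B hBo hBpc hBV p q hp hq hgp hgq hpS
    obtain ⟨I, σ, hsec, ht₀I, hσa, t, htI, hσt⟩ := hpS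
    have ht : t = g p := by rw [← hσt, (hsec.2.2.2 t htI).2]
    subst ht
    have hτsec : IsSecX Φ g B τ :=
      ⟨hBo, hBpc, hτc.mono hBV, fun s hs => ⟨(hτs s (hBV hs)).2.1, (hτs s (hBV hs)).2.2⟩⟩
    have hτp : τ (g p) = p := (hτinv p hp).2
    have heqpt : σ (g p) = τ (g p) := by rw [hσt, hτp]
    have hglue := sec_glue hch hsec hτsec htI hgp heqpt
    refine ⟨_, _, hglue, Or.inl ht₀I, by simp [ht₀I, hσa], g q, Or.inr hgq, ?_⟩
    have hστ : ∀ s ∈ I ∩ B, σ s = τ s := sec_unique hch hsec hτsec htI hgp heqpt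
    by_cases h : g q ∈ I
    · simp only [h, if_true]
      rw [hστ _ ⟨h, hgq⟩]
      exact (hτinv q hq).2
    · simp only [h, if_false]
      exact (hτinv q hq).2
  -- the local dichotomy
  have hloc : ∀ x : X, ∃ O, IsOpen O ∧ (x ∈ Φ → x ∈ O ∧ ∀ w ∈ O ∩ Φ, (x ∈ S ↔ w ∈ S)) := by
    intro x
    by_cases hx : x ∈ Φ
    swap
    · exact ⟨∅, isOpen_empty, fun h => absurd h hx⟩
    refine ?_
    obtain ⟨U, V, τ, hUo, hxU, hVo, hgxV, hτc, hτs, hτinv⟩ := hch x hx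
    obtain ⟨ε, hε, hball⟩ := Metric.isOpen_iff.1 hVo _ hgxV
    set B := Metric.ball (g x) ε with hBdef
    refine ⟨U ∩ g ⁻¹' B, hUo.inter (Metric.isOpen_ball.preimage hg),
      fun _ => ⟨⟨hxU, Metric.mem_ball_self hε⟩, ?_⟩⟩
    rintro w ⟨⟨hwU, hwB⟩, hwΦ⟩
    constructor
    · intro hxS
      exact htrans U V τ hUo hVo hτc hτs hτinv B Metric.isOpen_ball
        (convex_ball _ _).isPreconnected hball x w ⟨hxU, hx⟩ ⟨hwU, hwΦ⟩
        (Metric.mem_ball_self hε) hwB hxS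
    · intro hwS
      exact htrans U V τ hUo hVo hτc hτs hτinv B Metric.isOpen_ball
        (convex_ball _ _).isPreconnected hball w x ⟨hwU, hwΦ⟩ ⟨hxU, hx⟩
        hwB (Metric.mem_ball_self hε) hwS
  -- conclude by connectedness
  choose O hOo hO using hloc
  by_cases hbS : b ∈ S
  · obtain ⟨I, σ, hsec, ht₀I, hσa, t, htI, hσt⟩ := hbS
    have hteq : t = g b := by rw [← hσt, (hsec.2.2.2 t htI).2]
    rw [← hσa, ← hσt, hteq, ← hgab]
  · exfalso
    set OS : Set X := ⋃ x ∈ Φ ∩ S, O x with hOSdef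
    set ON : Set X := ⋃ x ∈ Φ \ S, O x with hONdef
    have hOSo : IsOpen OS := isOpen_biUnion fun x _ => hOo x
    have hONo : IsOpen ON := isOpen_biUnion fun x _ => hOo x
    have hRpc : IsPreconnected (connectedComponentIn Φ a) :=
      isPreconnected_connectedComponentIn
    have hcov : connectedComponentIn Φ a ⊆ OS ∪ ON := by
      intro x hxR
      have hxΦ : x ∈ Φ := connectedComponentIn_subset Φ a hxR
      by_cases hxS : x ∈ S
      · exact Or.inl (mem_biUnion ⟨hxΦ, hxS⟩ (hO x hxΦ).1)
      · exact Or.inr (mem_biUnion ⟨hxΦ, hxS⟩ (hO x hxΦ).1)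
    have hne₁ : (connectedComponentIn Φ a ∩ OS).Nonempty :=
      ⟨a, mem_connectedComponentIn ha, mem_biUnion ⟨ha, haS⟩ (hO a ha).1⟩
    have hne₂ : (connectedComponentIn Φ a ∩ ON).Nonempty :=
      ⟨b, hbR, mem_biUnion ⟨hb, hbS⟩ (hO b hb).1⟩
    obtain ⟨y, hyR, hyOS, hyON⟩ := hRpc OS ON hOSo hONo hcov hne₁ hne₂
    have hyΦ : y ∈ Φ := connectedComponentIn_subset Φ a hyR
    obtain ⟨x₁, hx₁, hyO₁⟩ := mem_iUnion₂.1 hyOS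
    obtain ⟨x₂, hx₂, hyO₂⟩ := mem_iUnion₂.1 hyON
    have hyS : y ∈ S := ((hO x₁ hx₁.1).2 y ⟨hyO₁, hyΦ⟩).1 hx₁.2
    exact hx₂.2 (((hO x₂ hx₂.1).2 y ⟨hyO₂, hyΦ⟩).2 hyS)

end SecTheory

theorem stmt_10 (n : ℕ) (F : (Fin (n + 2) → ℝ) → Fin (n + 2) → ℝ)
    (hF : IsLocalHomeomorph F) (i : Fin (n + 2))
    (Fi : (Fin (n + 2) → ℝ) → Fin (n + 1) → ℝ)
    (hFi : Fi = fun x j => F x (i.succAbove j))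
    (c : Fin (n + 1) → ℝ) (hc : c ∈ Set.range Fi)
    (x₀ : Fin (n + 2) → ℝ) (hx₀ : Fi x₀ = c)
    (R : Set (Fin (n + 2) → ℝ)) (hR : R = connectedComponentIn (Fi ⁻¹' {c}) x₀) :
    Set.InjOn (fun x => F x i) R := by
  set Φ : Set (Fin (n + 2) → ℝ) := Fi ⁻¹' {c} with hΦdef
  set g : (Fin (n + 2) → ℝ) → ℝ := fun x => F x i with hgdef
  have hgcont : Continuous g := (continuous_apply i).comp hF.continuous
  have hins : Continuous fun t : ℝ => (Fin.insertNth (α := fun _ => ℝ) i t c) := by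
    apply continuous_pi
    intro k
    rcases eq_or_ne k i with rfl | hk
    · simpa only [Fin.insertNth_apply_same] using continuous_id'
    · obtain ⟨j, rfl⟩ := Fin.exists_succAbove_eq hk
      simpa only [Fin.insertNth_apply_succAbove] using continuous_const
  -- key identity
  have hid : ∀ w : Fin (n + 2) → ℝ, w ∈ Φ → (Fin.insertNth (α := fun _ => ℝ) i (g w) c) = F w := by
    intro w hw
    have hFiw : Fi w = c := hw
    funext k
    rcases eq_or_ne k i with rfl | hk
    · simp [Fin.insertNth_apply_same, hgdef]
    · obtain ⟨j, rfl⟩ := Fin.exists_succAbove_eq hk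
      rw [Fin.insertNth_apply_succAbove, ← hFiw, hFi]
  -- chart property
  have hch : ChartX Φ g := by
    intro z hz
    obtain ⟨e, hze, hFe⟩ := hF z
    refine ⟨e.source, {t | (Fin.insertNth (α := fun _ => ℝ) i t c) ∈ e.target}, fun t => e.symm ((Fin.insertNth (α := fun _ => ℝ) i t c)),
      e.open_source, hze, e.open_target.preimage hins, ?_, ?_, ?_, ?_⟩
    · show (Fin.insertNth (α := fun _ => ℝ) i (g z) c) ∈ e.target
      rw [hid z hz, hFe]
      exact e.map_source hze
    · exact e.continuousOn_symm.comp hins.continuousOn fun t ht => ht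
    · intro t ht
      have hmem : e.symm ((Fin.insertNth (α := fun _ => ℝ) i t c)) ∈ e.source := e.map_target ht
      have hright : F (e.symm ((Fin.insertNth (α := fun _ => ℝ) i t c))) = (Fin.insertNth (α := fun _ => ℝ) i t c) := by
        rw [hFe]; exact e.right_inv ht
      refine ⟨hmem, ?_, ?_⟩
      · show Fi _ = c
        funext j
        rw [hFi]
        show F (e.symm ((Fin.insertNth (α := fun _ => ℝ) i t c))) (i.succAbove j) = c j
        rw [hright, Fin.insertNth_apply_succAbove]
      · show F (e.symm ((Fin.insertNth (α := fun _ => ℝ) i t c))) i = t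
        rw [hright, Fin.insertNth_apply_same]
    · rintro w ⟨hwU, hwΦ⟩
      have h1 : (Fin.insertNth (α := fun _ => ℝ) i (g w) c) = F w := hid w hwΦ
      constructor
      · show (Fin.insertNth (α := fun _ => ℝ) i (g w) c) ∈ e.target
        rw [h1, hFe]
        exact e.map_source hwU
      · show e.symm ((Fin.insertNth (α := fun _ => ℝ) i (g w) c)) = w
        rw [h1, hFe]
        exact e.left_inv hwU
  -- apply the key injectivity result
  intro x hx y hy hxy
  have hxΦ : x ∈ Φ := by rw [hR] at hx; exact connectedComponentIn_subset _ _ hx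
  have hyΦ : y ∈ Φ := by rw [hR] at hy; exact connectedComponentIn_subset _ _ hy
  have hyx : y ∈ connectedComponentIn Φ x := by
    rw [hR] at hx hy
    rwa [← connectedComponentIn_eq hx]
  exact key_inj hch hgcont hxΦ hyΦ hyx hxy
end

section
/- Let f : ℝ² → ℝ be a C¹ submersion (nowhere vanishing gradient) whose nonempty fibers are connected and closed, each diffeomorphic to ℝ, and whose image is an open interval. If additionally f arises as a coordinate function of a C¹ local diffeomorphism of ℝ², then (special case of Proposition 2.7 of [TZ]) the domain ℝ² is diffeomorphic to the product of a fiber with the image interval; in particular each fiber separates ℝ² into exactly two connected components. -/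
open Set

/-- Any nonempty open interval `Ioo a b` in `ℝ` is order isomorphic to `ℝ`. -/
lemma aux_ioo_orderIso {a b : ℝ} (hab : a < b) :
    Nonempty ((Ioo a b : Set ℝ) ≃o ℝ) := by
  have hba : (0:ℝ) < 2 / (b - a) := div_pos two_pos (sub_pos.mpr hab)
  let aff : ℝ ≃o ℝ :=
    (OrderIso.addRight (-a)).trans ((OrderIso.mulRight₀ (2/(b-a)) hba).trans
      (OrderIso.addRight (-1)))
  have haffa : aff a = -1 := by
    simp only [aff, OrderIso.trans_apply]
    show (a + -a) * (2 / (b - a)) + -1 = -1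
    ring
  have haffb : aff b = 1 := by
    have hne : b - a ≠ 0 := sub_ne_zero.mpr hab.ne'
    simp only [aff, OrderIso.trans_apply]
    show (b + -a) * (2 / (b - a)) + -1 = 1
    field_simp
    ring
  have him : aff '' Ioo a b = Ioo (-1 : ℝ) 1 := by
    rw [OrderIso.image_Ioo, haffa, haffb]
  have e1 : (Ioo a b : Set ℝ) ≃o (aff '' Ioo a b : Set ℝ) :=
    StrictMonoOn.orderIso aff _ (aff.strictMono.strictMonoOn _)
  have e2 : (aff '' Ioo a b : Set ℝ) ≃o (Ioo (-1:ℝ) 1 : Set ℝ) :=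
    OrderIso.setCongr _ _ him
  exact ⟨(e1.trans e2).trans (orderIsoIooNegOneOne ℝ).symm⟩

/-- A nonempty open order-connected subset of `ℝ` is homeomorphic to `ℝ`. -/
lemma aux_homeo_real (S : Set ℝ) (hO : IsOpen S) (hC : S.OrdConnected)
    (hne : S.Nonempty) : Nonempty (S ≃ₜ ℝ) := by
  classical
  -- map into the bounded interval (-1,1)
  let h1 : ℝ ≃o Ioo (-1 : ℝ) 1 := orderIsoIooNegOneOne ℝ
  let g : ℝ → ℝ := fun x => (h1 x : ℝ)
  have hg : StrictMono g := fun x y hxy => by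
    exact_mod_cast h1.strictMono hxy
  set S' : Set ℝ := g '' S with hS'def
  have hS'sub : S' ⊆ Ioo (-1 : ℝ) 1 := by
    rintro _ ⟨x, _, rfl⟩; exact (h1 x).2
  have hS'ne : S'.Nonempty := hne.image g
  have hbdda : BddAbove S' := ⟨1, fun x hx => (hS'sub hx).2.le⟩
  have hbddb : BddBelow S' := ⟨-1, fun x hx => (hS'sub hx).1.le⟩
  -- S' is order connected
  have hC' : S'.OrdConnected := by
    constructor
    rintro _ ⟨u, hu, rfl⟩ _ ⟨v, hv, rfl⟩ t ht
    have htIoo : t ∈ Ioo (-1 : ℝ) 1 :=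
      ⟨lt_of_lt_of_le (h1 u).2.1 ht.1, lt_of_le_of_lt ht.2 (h1 v).2.2⟩
    set w := h1.symm ⟨t, htIoo⟩ with hw
    have hgw : g w = t := by
      simp only [g, hw, OrderIso.apply_symm_apply]
    have hwu : u ≤ w := by
      have : h1 u ≤ h1 w := by
        rw [hw, OrderIso.apply_symm_apply]
        exact Subtype.mk_le_mk.mpr ht.1
      exact h1.le_iff_le.mp this
    have hwv : w ≤ v := by
      have : h1 w ≤ h1 v := by
        rw [hw, OrderIso.apply_symm_apply]
        exact Subtype.mk_le_mk.mpr ht.2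
      exact h1.le_iff_le.mp this
    exact ⟨w, hC.out hu hv ⟨hwu, hwv⟩, hgw⟩
  -- S' has no least and no greatest element
  have hnomin : ∀ x ∈ S', ∃ y ∈ S', y < x := by
    rintro _ ⟨w, hw, rfl⟩
    obtain ⟨ε, hε, hball⟩ := Metric.isOpen_iff.mp hO w hw
    have hmem : w - ε/2 ∈ S := by
      apply hball
      rw [Metric.mem_ball, Real.dist_eq,
        show w - ε/2 - w = -(ε/2) by ring, abs_neg, abs_of_nonneg (by linarith)]
      linarith
    exact ⟨g (w - ε/2), ⟨_, hmem, rfl⟩, hg (by linarith)⟩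
  have hnomax : ∀ x ∈ S', ∃ y ∈ S', x < y := by
    rintro _ ⟨w, hw, rfl⟩
    obtain ⟨ε, hε, hball⟩ := Metric.isOpen_iff.mp hO w hw
    have hmem : w + ε/2 ∈ S := by
      apply hball
      rw [Metric.mem_ball, Real.dist_eq,
        show w + ε/2 - w = ε/2 by ring, abs_of_nonneg (by linarith)]
      linarith
    exact ⟨g (w + ε/2), ⟨_, hmem, rfl⟩, hg (by linarith)⟩
  -- S' is exactly an open interval
  set a := sInf S' with ha
  set b := sSup S' with hb
  have hS'eq : S' = Ioo a b := by
    apply Subset.antisymm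
    · intro x hx
      obtain ⟨y, hy, hyx⟩ := hnomin x hx
      obtain ⟨z, hz, hxz⟩ := hnomax x hx
      exact ⟨lt_of_le_of_lt (csInf_le hbddb hy) hyx,
        lt_of_lt_of_le hxz (le_csSup hbdda hz)⟩
    · intro x hx
      obtain ⟨y, hy, hyx⟩ := exists_lt_of_csInf_lt hS'ne hx.1
      obtain ⟨z, hz, hxz⟩ := exists_lt_of_lt_csSup hS'ne hx.2
      exact hC'.out hy hz ⟨hyx.le, hxz.le⟩
  have hab : a < b := by
    obtain ⟨x, hx⟩ := hS'ne
    rw [hS'eq] at hx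
    exact lt_trans hx.1 hx.2
  -- assemble the order isomorphism S ≃o ℝ
  obtain ⟨eI⟩ := aux_ioo_orderIso hab
  have eS : S ≃o S' := StrictMonoOn.orderIso g S (hg.strictMonoOn S)
  have e : S ≃o ℝ := (eS.trans (OrderIso.setCongr _ _ hS'eq)).trans eI
  haveI : OrdConnected S := hC
  exact ⟨e.toHomeomorph⟩

/-- A C¹ function with nowhere-vanishing derivative is an open map. -/
lemma aux_isOpenMap (f : ℝ × ℝ → ℝ) (hf : ContDiff ℝ 1 f)
    (hsub : ∀ p, fderiv ℝ f p ≠ 0) : IsOpenMap f := by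
  apply IsOpenMap.of_nhds_le
  intro p
  have hd : HasStrictFDerivAt f (fderiv ℝ f p) p :=
    hf.contDiffAt.hasStrictFDerivAt one_ne_zero
  have hr : LinearMap.range (fderiv ℝ f p : ℝ × ℝ →ₗ[ℝ] ℝ) = ⊤ := by
    rw [LinearMap.range_eq_top]
    intro y
    have : ∃ v, fderiv ℝ f p v ≠ 0 := by
      by_contra h
      push_neg at h
      exact hsub p (ContinuousLinearMap.ext fun v => by simp [h v])
    obtain ⟨v, hv⟩ := this
    refine ⟨(y / fderiv ℝ f p v) • v, ?_⟩
    simp [map_smul, div_mul_cancel₀ _ hv]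
  exact le_of_eq (hd.map_nhds_eq_of_surj hr).symm

/-- Preimage of an open order-connected set under an open map with connected fibers
is connected. -/
lemma aux_connected_preimage (f : ℝ × ℝ → ℝ) (hcont : Continuous f)
    (hom : IsOpenMap f)
    (hconn : ∀ c : ℝ, (f ⁻¹' {c}).Nonempty → IsConnected (f ⁻¹' {c}))
    (hord : (Set.range f).OrdConnected)
    (I : Set ℝ) (hIopen : IsOpen I) (hIo : I.OrdConnected)
    (hne : (Set.range f ∩ I).Nonempty) :
    IsConnected (f ⁻¹' I) := by
  obtain ⟨y0, ⟨p0, hp0⟩, hy0I⟩ := hne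
  constructor
  · exact ⟨p0, by simpa [hp0] using hy0I⟩
  intro u v hu hv hsub hsu hsv
  by_contra hempty
  rw [Set.not_nonempty_iff_eq_empty] at hempty
  -- each fiber over a point of `range f ∩ I` lies entirely in u or in v
  have hfib : ∀ y ∈ Set.range f ∩ I, f ⁻¹' {y} ⊆ u ∨ f ⁻¹' {y} ⊆ v := by
    rintro y ⟨⟨p, hp⟩, hyI⟩
    have hfne : (f ⁻¹' {y}).Nonempty := ⟨p, hp⟩
    have hfsub : f ⁻¹' {y} ⊆ f ⁻¹' I := fun q hq => by
      simp only [mem_preimage, mem_singleton_iff] at hq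
      simp [mem_preimage, hq, hyI]
    have hfc := (hconn y hfne).isPreconnected
    by_contra h
    push_neg at h
    obtain ⟨h1, h2⟩ := h
    have hfu : (f ⁻¹' {y} ∩ u).Nonempty := by
      rw [Set.not_subset] at h2
      obtain ⟨q, hq, hqv⟩ := h2
      rcases hsub (hfsub hq) with h | h
      · exact ⟨q, hq, h⟩
      · exact absurd h hqv
    have hfv : (f ⁻¹' {y} ∩ v).Nonempty := by
      rw [Set.not_subset] at h1
      obtain ⟨q, hq, hqu⟩ := h1
      rcases hsub (hfsub hq) with h | h
      · exact absurd h hqu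
      · exact ⟨q, hq, h⟩
    obtain ⟨q, hq⟩ := hfc u v hu hv (hfsub.trans hsub) hfu hfv
    have : q ∈ f ⁻¹' I ∩ (u ∩ v) := ⟨hfsub hq.1, hq.2⟩
    rw [hempty] at this
    exact this
  set D := Set.range f ∩ I with hD
  have hDpre : IsPreconnected D := (hord.inter hIo).isPreconnected
  set CA := f '' (f ⁻¹' I ∩ u) with hCA
  set CB := f '' (f ⁻¹' I ∩ v) with hCB
  have hCAopen : IsOpen CA := hom _ ((hIopen.preimage hcont).inter hu)
  have hCBopen : IsOpen CB := hom _ ((hIopen.preimage hcont).inter hv)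
  have hDsub : D ⊆ CA ∪ CB := by
    rintro y ⟨⟨p, hp⟩, hyI⟩
    have hpfib : p ∈ f ⁻¹' {y} := by simp [hp]
    have hpI : p ∈ f ⁻¹' I := by simp [hp, hyI]
    rcases hfib y ⟨⟨p, hp⟩, hyI⟩ with h | h
    · exact Or.inl ⟨p, ⟨hpI, h hpfib⟩, hp⟩
    · exact Or.inr ⟨p, ⟨hpI, h hpfib⟩, hp⟩
  have hDA : (D ∩ CA).Nonempty := by
    obtain ⟨p, hpI, hpu⟩ := hsu
    exact ⟨f p, ⟨⟨p, rfl⟩, hpI⟩, ⟨p, ⟨hpI, hpu⟩, rfl⟩⟩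
  have hDB : (D ∩ CB).Nonempty := by
    obtain ⟨p, hpI, hpv⟩ := hsv
    exact ⟨f p, ⟨⟨p, rfl⟩, hpI⟩, ⟨p, ⟨hpI, hpv⟩, rfl⟩⟩
  obtain ⟨y, hyD, hyA, hyB⟩ := hDpre CA CB hCAopen hCBopen hDsub hDA hDB
  obtain ⟨p1, ⟨hp1I, hp1u⟩, hp1⟩ := hyA
  obtain ⟨p2, ⟨hp2I, hp2v⟩, hp2⟩ := hyB
  rcases hfib y hyD with h | h
  · have : p2 ∈ f ⁻¹' I ∩ (u ∩ v) := ⟨hp2I, h (by simp [hp2]), hp2v⟩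
    rw [hempty] at this; exact this
  · have : p1 ∈ f ⁻¹' I ∩ (u ∩ v) := ⟨hp1I, hp1u, h (by simp [hp1])⟩
    rw [hempty] at this; exact this

theorem stmt_19 (f : ℝ × ℝ → ℝ) (hf : ContDiff ℝ 1 f)
    (hsub : ∀ p, fderiv ℝ f p ≠ 0)
    (hconn : ∀ c : ℝ, (f ⁻¹' {c}).Nonempty → IsConnected (f ⁻¹' {c}))
    (hclosed : ∀ c : ℝ, IsClosed (f ⁻¹' {c}))
    (hfiber : ∀ c : ℝ, (f ⁻¹' {c}).Nonempty →
      Nonempty ((f ⁻¹' {c} : Set (ℝ × ℝ)) ≃ₜ ℝ))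
    (hopen : IsOpen (Set.range f)) (hord : (Set.range f).OrdConnected)
    (hcoord : ∃ G : ℝ × ℝ → ℝ × ℝ, ContDiff ℝ 1 G ∧
      (∀ p, LinearMap.det ((fderiv ℝ G p).toLinearMap) ≠ 0) ∧
      ∀ p, (G p).1 = f p) :
    ∀ c : ℝ, (f ⁻¹' {c}).Nonempty →
      Nonempty ((ℝ × ℝ) ≃ₜ ((f ⁻¹' {c} : Set (ℝ × ℝ)) × (Set.range f : Set ℝ))) ∧
      Nat.card (ConnectedComponents ((f ⁻¹' {c})ᶜ : Set (ℝ × ℝ))) = 2 := by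
  classical
  intro c hc
  obtain ⟨p₀, hp₀⟩ := hc
  have hp₀c : f p₀ = c := hp₀
  have hcr : c ∈ Set.range f := ⟨p₀, hp₀c⟩
  -- points with value below and above c
  obtain ⟨ε, hε, hball⟩ := Metric.isOpen_iff.mp hopen c hcr
  have hlow : ∃ p, f p < c := by
    have : c - ε/2 ∈ Set.range f := by
      apply hball
      rw [Metric.mem_ball, Real.dist_eq,
        show c - ε/2 - c = -(ε/2) by ring, abs_neg, abs_of_nonneg (by linarith)]
      linarith
    obtain ⟨p, hp⟩ := this
    exact ⟨p, by rw [hp]; linarith⟩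
  have hhigh : ∃ p, c < f p := by
    have : c + ε/2 ∈ Set.range f := by
      apply hball
      rw [Metric.mem_ball, Real.dist_eq,
        show c + ε/2 - c = ε/2 by ring, abs_of_nonneg (by linarith)]
      linarith
    obtain ⟨p, hp⟩ := this
    exact ⟨p, by rw [hp]; linarith⟩
  obtain ⟨pl, hpl⟩ := hlow
  obtain ⟨ph, hph⟩ := hhigh
  have hom : IsOpenMap f := aux_isOpenMap f hf hsub
  -- sub- and super-level sets are connected
  have hU : IsConnected (f ⁻¹' Iio c) :=
    aux_connected_preimage f hf.continuous hom hconn hord (Iio c) isOpen_Iio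
      Set.ordConnected_Iio ⟨f pl, ⟨pl, rfl⟩, hpl⟩
  have hV : IsConnected (f ⁻¹' Ioi c) :=
    aux_connected_preimage f hf.continuous hom hconn hord (Ioi c) isOpen_Ioi
      Set.ordConnected_Ioi ⟨f ph, ⟨ph, rfl⟩, hph⟩
  constructor
  · -- the homeomorphism ℝ × ℝ ≃ₜ fiber × range
    obtain ⟨e1⟩ := hfiber c ⟨p₀, hp₀⟩
    obtain ⟨e2⟩ := aux_homeo_real (Set.range f) hopen hord ⟨c, hcr⟩
    exact ⟨(e1.prodCongr e2).symm⟩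
  · -- the complement has exactly two connected components
    set X := ((f ⁻¹' {c})ᶜ : Set (ℝ × ℝ)) with hX
    have hUX : f ⁻¹' Iio c ⊆ X := fun q hq => by
      simp only [hX, mem_compl_iff, mem_preimage, mem_singleton_iff]
      exact ne_of_lt hq
    have hVX : f ⁻¹' Ioi c ⊆ X := fun q hq => by
      simp only [hX, mem_compl_iff, mem_preimage, mem_singleton_iff]
      exact ne_of_gt hq
    let φ : X → Bool := fun p => decide (f p.1 < c)
    have hfc : Continuous (fun p : X => f p.1) :=
      hf.continuous.comp continuous_subtype_val
    have hA : φ ⁻¹' {true} = (fun p : X => f p.1) ⁻¹' (Iio c) := by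
      ext x; simp [φ, decide_eq_true_iff]
    have hB : φ ⁻¹' {false} = (fun p : X => f p.1) ⁻¹' (Ioi c) := by
      ext x
      simp only [φ, mem_preimage, mem_singleton_iff, decide_eq_false_iff_not,
        not_lt, mem_Ioi]
      constructor
      · intro h; exact lt_of_le_of_ne h (Ne.symm x.2)
      · intro h; exact h.le
    have hAopen : IsOpen (φ ⁻¹' {true}) := by
      rw [hA]; exact isOpen_Iio.preimage hfc
    have hBopen : IsOpen (φ ⁻¹' {false}) := by
      rw [hB]; exact isOpen_Ioi.preimage hfc
    have hφ : Continuous φ := by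
      rw [continuous_def]
      intro s _
      by_cases ht : true ∈ s <;> by_cases hf' : false ∈ s
      · have : φ ⁻¹' s = Set.univ := by
          ext x; cases hx : φ x <;> simp [hx, ht, hf']
        rw [this]; exact isOpen_univ
      · have : φ ⁻¹' s = φ ⁻¹' {true} := by
          ext x; cases hx : φ x <;> simp [hx, ht, hf']
        rw [this]; exact hAopen
      · have : φ ⁻¹' s = φ ⁻¹' {false} := by
          ext x; cases hx : φ x <;> simp [hx, ht, hf']
        rw [this]; exact hBopen
      · have : φ ⁻¹' s = ∅ := by
          ext x; cases hx : φ x <;> simp [hx, ht, hf']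
        rw [this]; exact isOpen_empty
    let ψ : ConnectedComponents X → Bool := hφ.connectedComponentsLift
    -- preconnectedness of the two pieces inside X
    have hApre : IsPreconnected (φ ⁻¹' {true}) := by
      rw [hA]
      have : Subtype.val '' ((fun p : X => f p.1) ⁻¹' (Iio c)) = f ⁻¹' Iio c := by
        ext q
        constructor
        · rintro ⟨⟨q', hq'⟩, hmem, rfl⟩; exact hmem
        · intro hq; exact ⟨⟨q, hUX hq⟩, hq, rfl⟩
      rw [← Topology.IsInducing.subtypeVal.isPreconnected_image, this]
      exact hU.isPreconnected
    have hBpre : IsPreconnected (φ ⁻¹' {false}) := by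
      rw [hB]
      have : Subtype.val '' ((fun p : X => f p.1) ⁻¹' (Ioi c)) = f ⁻¹' Ioi c := by
        ext q
        constructor
        · rintro ⟨⟨q', hq'⟩, hmem, rfl⟩; exact hmem
        · intro hq; exact ⟨⟨q, hVX hq⟩, hq, rfl⟩
      rw [← Topology.IsInducing.subtypeVal.isPreconnected_image, this]
      exact hV.isPreconnected
    have hbij : Function.Bijective ψ := by
      constructor
      · intro x y hxy
        obtain ⟨p, rfl⟩ := ConnectedComponents.surjective_coe x
        obtain ⟨q, rfl⟩ := ConnectedComponents.surjective_coe y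
        have hpq : φ p = φ q := by
          simpa [ψ, Continuous.connectedComponentsLift_apply_coe] using hxy
        have key : ∀ s : Set X, IsPreconnected s → p ∈ s → q ∈ s →
            (p : ConnectedComponents X) = q := by
          intro s hs hp hq
          rw [ConnectedComponents.coe_eq_coe']
          exact hs.subset_connectedComponent hq hp
        cases hq : φ q with
        | true =>
          exact key _ hApre (by rw [mem_preimage, hpq, hq]; rfl)
            (by rw [mem_preimage, hq]; rfl)
        | false =>
          exact key _ hBpre (by rw [mem_preimage, hpq, hq]; rfl)
            (by rw [mem_preimage, hq]; rfl)
      · intro b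
        cases b with
        | true =>
          refine ⟨(⟨pl, hUX hpl⟩ : X), ?_⟩
          simp [ψ, Continuous.connectedComponentsLift_apply_coe, φ, hpl]
        | false =>
          refine ⟨(⟨ph, hVX hph⟩ : X), ?_⟩
          simp [ψ, Continuous.connectedComponentsLift_apply_coe, φ,
            not_lt.mpr hph.le]
    calc Nat.card (ConnectedComponents X) = Nat.card Bool :=
          Nat.card_congr (Equiv.ofBijective ψ hbij)
      _ = 2 := by simp [Nat.card_eq_fintype_card]
end
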